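/- For a fixed k ≥ 1 with t = ⌊log_2 k⌋ + 1 and fixed remainder r ∈ {0,...,2^t - 1}, the sequence w(k, r + j·2^t) for j = 1, 2, 3, ... (restricted to arguments ≥ 2k+1) is an arithmetic progression with common difference λ = s(k, k+1+2^t, 2^t). -/
import Mathlib


/-- Derivative of a binary sequence (indexed by ℕ, zero-padded beyond its length). -/
def d (x : ℕ → ZMod 2) : ℕ → ZMod 2 := fun i => x i + x (i + 1)

/-- The k-th canonical basis vector (as a zero-padded ℕ-indexed sequence). -/
def e (k : ℕ) : ℕ → ZMod 2 := fun i => if i = k then 1 else 0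

/-- Zero-padding of a vector of F_2^n to an ℕ-indexed sequence. -/
def pad (n : ℕ) (x : Fin n → ZMod 2) : ℕ → ZMod 2 :=
  fun i => if h : i < n then x ⟨i, h⟩ else 0

/-- Number of ones among the first `len` entries of a sequence. -/
def rowW (x : ℕ → ZMod 2) (len : ℕ) : ℕ :=
  ((Finset.range len).filter (fun c => x c = 1)).card

/-- Weight of the Steinhaus triangle of size n generated by x. -/
def triW (x : ℕ → ZMod 2) (n : ℕ) : ℕ :=
  ∑ r ∈ Finset.range n, rowW (d^[r] x) (n - r)

/-- w k n : weight of the Steinhaus triangle generated by e_k^{(n)}. -/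
def w (k n : ℕ) : ℕ := triW (e k) n

/-- s k n m : total weight of rows 0,…,m-1 of the triangle T(e_k^{(n)}). -/
def s (k n m : ℕ) : ℕ :=
  ∑ r ∈ Finset.range m, rowW (d^[r] (e k)) (n - r)

lemma d_pow_two (m : ℕ) (x : ℕ → ZMod 2) (i : ℕ) :
    (d^[2 ^ m] x) i = x i + x (i + 2 ^ m) := by
  induction m generalizing x i with
  | zero => simp [d]
  | succ m ih =>
    have key : ∀ a b c : ZMod 2, (a + b) + (b + c) = a + c := by decide
    have h2 : 2 ^ (m + 1) = 2 ^ m + 2 ^ m := by ring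
    rw [h2, Function.iterate_add_apply]
    calc (d^[2 ^ m] (d^[2 ^ m] x)) i
        = (d^[2 ^ m] x) i + (d^[2 ^ m] x) (i + 2 ^ m) := ih _ _
      _ = (x i + x (i + 2 ^ m)) + (x (i + 2 ^ m) + x (i + 2 ^ m + 2 ^ m)) := by
          rw [ih, ih]
      _ = x i + x (i + (2 ^ m + 2 ^ m)) := by
          rw [show i + 2 ^ m + 2 ^ m = i + (2 ^ m + 2 ^ m) by ring]
          exact key _ _ _

lemma vanish (k : ℕ) : ∀ r i, k < i → d^[r] (e k) i = 0 := by
  intro r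
  induction r with
  | zero =>
    intro i hi
    show e k i = 0
    unfold e
    rw [if_neg (by omega)]
  | succ r ih =>
    intro i hi
    rw [Function.iterate_succ_apply']
    show d^[r] (e k) i + d^[r] (e k) (i + 1) = 0
    rw [ih i hi, ih (i + 1) (by omega), add_zero]

lemma period (k t : ℕ) (h : k < 2 ^ t) : d^[2 ^ t] (e k) = e k := by
  funext i
  rw [d_pow_two]
  have : e k (i + 2 ^ t) = 0 := by unfold e; rw [if_neg (by omega)]
  rw [this, add_zero]

lemma rowW_stable (k r len : ℕ) (h : k + 1 ≤ len) :
    rowW (d^[r] (e k)) len = rowW (d^[r] (e k)) (k + 1) := by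
  unfold rowW
  congr 1
  apply Finset.ext
  intro c
  simp only [Finset.mem_filter, Finset.mem_range]
  constructor
  · rintro ⟨hc, hx⟩
    refine ⟨?_, hx⟩
    by_contra hck
    rw [vanish k r c (by omega)] at hx
    exact one_ne_zero hx.symm
  · rintro ⟨hc, hx⟩
    exact ⟨by omega, hx⟩

/-- for fixed k and remainder r, j ↦ w(k, r + j·2^t) is arithmetic with
difference λ = s(k, k+1+2^t, 2^t). -/
theorem stmt11 (k : ℕ) (hk : 1 ≤ k) (t : ℕ) (ht : t = Nat.log 2 k + 1)
    (r : ℕ) (hr : r < 2 ^ t) (lam : ℕ) (hlam : lam = s k (k + 1 + 2 ^ t) (2 ^ t))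
    (j : ℕ) (hj : 1 ≤ j) (hbig : 2 * k + 1 ≤ r + j * 2 ^ t) :
    w k (r + (j + 1) * 2 ^ t) = w k (r + j * 2 ^ t) + lam := by
  have hkt : k < 2 ^ t := by
    rw [ht]; exact Nat.lt_pow_succ_log_self (by norm_num) k
  set N := r + j * 2 ^ t with hN
  have hN2 : r + (j + 1) * 2 ^ t = 2 ^ t + N := by rw [hN]; ring
  rw [hN2]
  unfold w triW
  rw [Finset.sum_range_add]
  have hsecond : ∀ ρ ∈ Finset.range N,
      rowW (d^[2 ^ t + ρ] (e k)) (2 ^ t + N - (2 ^ t + ρ)) = rowW (d^[ρ] (e k)) (N - ρ) := by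
    intro ρ _
    have : d^[2 ^ t + ρ] (e k) = d^[ρ] (e k) := by
      rw [add_comm, Function.iterate_add_apply, period k t hkt]
    rw [this]
    congr 1
    omega
  rw [Finset.sum_congr rfl hsecond]
  have hfirst : ∑ ρ ∈ Finset.range (2 ^ t), rowW (d^[ρ] (e k)) (2 ^ t + N - ρ) = lam := by
    rw [hlam]
    unfold s
    apply Finset.sum_congr rfl
    intro ρ hρ
    rw [Finset.mem_range] at hρ
    rw [rowW_stable k ρ _ (by omega), rowW_stable k ρ (k + 1 + 2 ^ t - ρ) (by omega)]
  rw [hfirst]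
  ring
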